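/- (Consistency of the (H₃)″ flat-coordinate formulas.) Let t₁, t₂, t₃, Z ∈ ℂ satisfy Z² + t₂ − t₃² = 0 and Z ≠ 0. Define y₁ = (288/25)(135t₁t₂ + 405t₁t₃² − 90t₂²t₃ − 108t₂²Z + 1070t₂t₃³ + 216t₂t₃²Z + 2292t₃⁵ − 108t₃⁴Z), y₂ = (8/5)(27t₁ + 90t₂t₃ + 160t₃³), y₃ = 12t₃. Define the Jacobian entries J_{iα} := ∂yᵢ/∂tₐ + (∂yᵢ/∂Z)·ζₐ, where the partial derivatives of the above polynomial expressions are taken treating t₁,t₂,t₃,Z as independent variables and ζ₁ = 0, ζ₂ = −1/(2Z), ζ₃ = t₃/Z. Define the symmetric matrix g with entries g^{11} = (4/243)(585t₂²t₃ + 3240t₂t₃³ + 4456t₃⁵ − 324Z(t₂² − 7t₂t₃² + 6t₃⁴)), g^{12} = −(4/27)(33t₂² + 4t₂t₃(18Z − 13t₃) − 72t₃³(Z + t₃)), g^{13} = t₁, g^{22} = t₁ − (22/3)t₂t₃ + (52/27)t₃³ + 4Z(t₂ − t₃²), g^{23} = (2/3)t₂, g^{33} = (1/3)t₃. Then for all i,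 j ∈ {1,2,3}: ∑_{α,β=1}^{3} J_{iα} g^{αβ} J_{jβ} = G^{ij}(y₁,y₂,y₃), where G^{11} = 30y₂³ + 36y₂²y₃³ + 8y₁y₃⁴, G^{12} = 28y₂²y₃ + 8y₂y₃⁴, G^{13} = 20y₁, G^{22} = 8y₁ + 8y₂y₃², G^{23} = 12y₂, G^{33} = 4y₃. -/

import Mathlib

open MvPolynomial

noncomputable section

/-- The basic invariants `y₁, y₂, y₃` of `H₃` as polynomial expressions in the flat coordinates
`t₁, t₂, t₃` (variables `X 0, X 1, X 2`) and the auxiliary variable `Z` (variable `X 3`) of the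
algebraic Frobenius manifold `(H₃)″`. -/
def YH32 : Fin 3 → MvPolynomial (Fin 4) ℂ :=
  ![C ((288 : ℂ) / 25) *
      (135 * X 0 * X 1 + 405 * X 0 * X 2 ^ 2 - 90 * X 1 ^ 2 * X 2 - 108 * X 1 ^ 2 * X 3
        + 1070 * X 1 * X 2 ^ 3 + 216 * X 1 * X 2 ^ 2 * X 3 + 2292 * X 2 ^ 5
        - 108 * X 2 ^ 4 * X 3),
    C ((8 : ℂ) / 5) * (27 * X 0 + 90 * X 1 * X 2 + 160 * X 2 ^ 3),
    12 * X 2]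

/-- The intersection form of the algebraic Frobenius manifold `(H₃)″` in its flat
coordinates `t₁, t₂, t₃` with auxiliary algebraic variable `Z`. -/
def gH32 (t₁ t₂ t₃ Z : ℂ) : Matrix (Fin 3) (Fin 3) ℂ :=
  !![(4 / 243) * (585 * t₂ ^ 2 * t₃ + 3240 * t₂ * t₃ ^ 3 + 4456 * t₃ ^ 5
        - 324 * Z * (t₂ ^ 2 - 7 * t₂ * t₃ ^ 2 + 6 * t₃ ^ 4)),
      -(4 / 27) * (33 * t₂ ^ 2 + 4 * t₂ * t₃ * (18 * Z - 13 * t₃) - 72 * t₃ ^ 3 * (Z + t₃)),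
      t₁;
    -(4 / 27) * (33 * t₂ ^ 2 + 4 * t₂ * t₃ * (18 * Z - 13 * t₃) - 72 * t₃ ^ 3 * (Z + t₃)),
      t₁ - (22 / 3) * t₂ * t₃ + (52 / 27) * t₃ ^ 3 + 4 * Z * (t₂ - t₃ ^ 2),
      (2 / 3) * t₂;
    t₁, (2 / 3) * t₂, (1 / 3) * t₃]

/-- The `H₃` intersection form expressed in the basic invariants `y₁, y₂, y₃`. -/
def GH3 (y₁ y₂ y₃ : ℂ) : Matrix (Fin 3) (Fin 3) ℂ :=
  !![30 * y₂ ^ 3 + 36 * y₂ ^ 2 * y₃ ^ 3 + 8 * y₁ * y₃ ^ 4,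
      28 * y₂ ^ 2 * y₃ + 8 * y₂ * y₃ ^ 4, 20 * y₁;
    28 * y₂ ^ 2 * y₃ + 8 * y₂ * y₃ ^ 4, 8 * y₁ + 8 * y₂ * y₃ ^ 2, 12 * y₂;
    20 * y₁, 12 * y₂, 4 * y₃]

/-!
On the curve `Z² = t₃² - t₂` implicit differentiation gives `∂Z/∂t = (0, -1/(2Z), t₃/Z)`,
so `J` is the Jacobian of `t ↦ y(t, Z(t))`. Since
`∂y₁/∂Z = -(288·108/25)(t₂ - t₃²)² = -(288·108/25) Z⁴`, the division by `Z` cancels and `J` is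
polynomial. Eliminating `t₂ = t₃² - Z²`, the identity
`J g Jᵀ = G(y)` becomes a polynomial identity in `t₁, t₃, Z`.
-/

theorem Derivation.map_ofNat {R A M : Type*} [CommSemiring R] [CommSemiring A] [Algebra R A]
    [AddCommMonoid M] [Module A M] [Module R M] (D : Derivation R A M) (n : ℕ) [n.AtLeastTwo] :
    D (no_index (OfNat.ofNat n : A)) = 0 := by
  rw [← Nat.cast_ofNat]
  exact D.map_natCast n

open scoped Matrix

theorem Matrix.mul_mul_transpose_apply {ι κ R : Type*} [Fintype κ] [Semiring R]
    (A C : Matrix ι κ R) (B : Matrix κ κ R) (i j : ι) :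
    (A * B * Cᵀ) i j = ∑ α, ∑ β, A i α * B α β * C j β := by
  simp only [Matrix.mul_apply, Matrix.transpose_apply, Finset.sum_mul]
  exact Finset.sum_comm

def jacobianH32 (t₁ t₂ t₃ Z : ℂ) : Matrix (Fin 3) (Fin 3) ℂ :=
  Matrix.of fun i α => eval ![t₁, t₂, t₃, Z] (pderiv α.castSucc (YH32 i)) +
    eval ![t₁, t₂, t₃, Z] (pderiv (3 : Fin 4) (YH32 i)) * ![0, -1 / (2 * Z), t₃ / Z] α

theorem jacobianH32_eq {t₁ t₂ t₃ Z : ℂ} (hrel : Z ^ 2 + t₂ - t₃ ^ 2 = 0) (hZ : Z ≠ 0) :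
    jacobianH32 t₁ t₂ t₃ Z = !![
      (288 / 25) * (135 * t₂ + 405 * t₃ ^ 2),
      (288 / 25) * (135 * t₁ - 180 * t₂ * t₃ - 216 * t₂ * Z + 1070 * t₃ ^ 3
        + 216 * t₃ ^ 2 * Z + 54 * Z ^ 3),
      (288 / 25) * (810 * t₁ * t₃ - 90 * t₂ ^ 2 + 3210 * t₂ * t₃ ^ 2 + 432 * t₂ * t₃ * Z
        + 11460 * t₃ ^ 4 - 432 * t₃ ^ 3 * Z - 108 * t₃ * Z ^ 3);
      216 / 5, 144 * t₃, (8 / 5) * (90 * t₂ + 480 * t₃ ^ 2);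
      0, 0, 12] := by
  obtain rfl : t₂ = t₃ ^ 2 - Z ^ 2 := by linear_combination hrel
  ext i α
  fin_cases i <;> fin_cases α <;>
    simp only [jacobianH32, YH32, Matrix.of_apply, Matrix.cons_val', Matrix.cons_val_zero,
      Matrix.cons_val_one, Matrix.cons_val_two, Matrix.empty_val', Matrix.cons_val_fin_one,
      Matrix.head_cons, Matrix.tail_cons, Matrix.head_fin_const, Matrix.cons_val,
      Fin.reduceFinMk, Fin.reduceCastSucc, Fin.isValue, Fin.reduceEq, if_true, if_false,
      map_add, map_sub, map_mul, map_pow, Derivation.leibniz, Derivation.leibniz_pow,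
      derivation_C, Derivation.map_ofNat, pderiv_X, Pi.single_apply, smul_eq_mul, nsmul_eq_mul,
      Nat.cast_ofNat, map_zero, map_one, eval_X, eval_C, eval_ofNat] <;>
    field_simp <;> ring

theorem jacobianH32_mul_gH32_mul_transpose {t₁ t₂ t₃ Z : ℂ} (hrel : Z ^ 2 + t₂ - t₃ ^ 2 = 0)
    (hZ : Z ≠ 0) :
    jacobianH32 t₁ t₂ t₃ Z * gH32 t₁ t₂ t₃ Z * (jacobianH32 t₁ t₂ t₃ Z)ᵀ =
      GH3 (eval ![t₁, t₂, t₃, Z] (YH32 0)) (eval ![t₁, t₂, t₃, Z] (YH32 1))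
        (eval ![t₁, t₂, t₃, Z] (YH32 2)) := by
  rw [jacobianH32_eq hrel hZ]
  obtain rfl : t₂ = t₃ ^ 2 - Z ^ 2 := by linear_combination hrel
  ext i j
  fin_cases i <;> fin_cases j <;>
    simp only [Matrix.mul_apply, Matrix.transpose_apply, Fin.sum_univ_three, gH32, GH3, YH32,
      Matrix.of_apply, Matrix.cons_val', Matrix.cons_val_zero, Matrix.cons_val_one,
      Matrix.cons_val_two, Matrix.empty_val', Matrix.cons_val_fin_one, Matrix.head_cons,
      Matrix.tail_cons, Matrix.head_fin_const, Matrix.cons_val, Fin.reduceFinMk, Fin.isValue,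
      map_add, map_sub, map_mul, map_pow, eval_X, eval_C, eval_ofNat] <;>
    ring

/-- Consistency of the `(H₃)″` flat-coordinate formulas:
`∑_{α,β} J_{iα} g^{αβ} J_{jβ} = G^{ij}(y₁, y₂, y₃)`, where `J_{iα} = ∂yᵢ/∂tₐ + (∂yᵢ/∂Z)·ζₐ`
with `ζ = (0, -1/(2Z), t₃/Z)`. -/
theorem statement_4 (t₁ t₂ t₃ Z : ℂ) (hrel : Z ^ 2 + t₂ - t₃ ^ 2 = 0) (hZ : Z ≠ 0) :
    ∀ i j : Fin 3,
      (∑ α : Fin 3, ∑ β : Fin 3,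
        (eval ![t₁, t₂, t₃, Z] (pderiv α.castSucc (YH32 i)) +
            eval ![t₁, t₂, t₃, Z] (pderiv (3 : Fin 4) (YH32 i)) *
              ![0, -1 / (2 * Z), t₃ / Z] α) *
          gH32 t₁ t₂ t₃ Z α β *
          (eval ![t₁, t₂, t₃, Z] (pderiv β.castSucc (YH32 j)) +
            eval ![t₁, t₂, t₃, Z] (pderiv (3 : Fin 4) (YH32 j)) *
              ![0, -1 / (2 * Z), t₃ / Z] β))
      = GH3 (eval ![t₁, t₂, t₃, Z] (YH32 0)) (eval ![t₁, t₂, t₃, Z] (YH32 1))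
          (eval ![t₁, t₂, t₃, Z] (YH32 2)) i j := by
  intro i j
  rw [← jacobianH32_mul_gH32_mul_transpose hrel hZ, Matrix.mul_mul_transpose_apply]
  rfl
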